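/- arXiv:1810.05632 — 3 statements merged into one kernel-verified Lean document; each statement's English description precedes it below -/
import Mathlib

section
/- Separation between level sets of an optical function: Let Φ : ℝ² → ℝ be differentiable with Lipschitz-continuous gradient, and suppose there are constants 0 < C₁ ≤ C₂ with C₁ ≤ |∇Φ(x)| ≤ C₂ for all x ∈ ℝ². Then for all h₁, h₂ ∈ ℝ the level set {y : Φ(y) = h₂} is non-empty, and for every x with Φ(x) = h₁ one has |h₁ − h₂| / C₂ ≤ dist( x, {y : Φ(y) = h₂} ) ≤ |h₁ − h₂| / C₁. -/
/-!
Near a point where `Φ ≠ h`, moving against the sign of `Φ - h` along the gradient lowers `|Φ - h|`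
at rate `‖∇Φ‖ ≥ C₁` while moving away from `x` at unit rate. Hence, for `c < C₁`, a minimiser of the
coercive function `z ↦ |Φ z - h| + c · dist z x` must lie on `{Φ = h}`, and comparing its value
with the value at `x` gives a point of the level set at distance at most `|Φ x - h| / c`. The lower
bound is the mean value inequality `|Φ x - Φ y| ≤ C₂ · dist x y`.
-/

open Metric Filter Set
open scoped NNReal Topology

section NormedSpace

variable {E : Type*} [NormedAddCommGroup E] [NormedSpace ℝ E]

theorem HasFDerivAt.neg_le_of_isLocalMin_add_lipschitzWith {u w : E → ℝ}
    {u' : E →L[ℝ] ℝ} {y : E} {K : ℝ≥0} (hu : HasFDerivAt u u' y) (hw : LipschitzWith K w)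
    (hmin : IsLocalMin (fun z => u z + w z) y) (v : E) : -u' v ≤ K * ‖v‖ := by
  set g : ℝ → ℝ := fun t => u (y + t • v) + K * ‖v‖ * t
  have hg : HasDerivAt g (u' v + K * ‖v‖) 0 := by
    have hcurve : HasDerivAt (fun t : ℝ => y + t • v) v 0 :=
      ((hasDerivAt_id (0 : ℝ)).smul_const v).const_add y |>.congr_deriv (one_smul ℝ v)
    have hu0 : HasFDerivAt u u' (y + (0 : ℝ) • v) := by simpa using hu
    have := (hu0.comp_hasDerivAt 0 hcurve).add ((hasDerivAt_id (0 : ℝ)).const_mul (K * ‖v‖))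
    rwa [mul_one] at this
  -- `u + w` is minimal at `y` and `w` grows at most like `K * t * ‖v‖` along the ray.
  have hgmin : IsLocalMinOn g (Ici 0) 0 := by
    have hcont : Tendsto (fun t : ℝ => y + t • v) (𝓝 0) (𝓝 y) := by
      simpa using (Continuous.tendsto (f := fun t : ℝ => y + t • v) (by fun_prop) 0)
    filter_upwards [nhdsWithin_le_nhds (hcont.eventually hmin), self_mem_nhdsWithin]
      with t hmin_t (ht : 0 ≤ t)
    have hlip : w (y + t • v) - w y ≤ K * ‖v‖ * t := by
      have := hw.dist_le_mul (y + t • v) y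
      rw [Real.dist_eq, dist_eq_norm, add_sub_cancel_left, norm_smul, Real.norm_of_nonneg ht]
        at this
      linarith [le_abs_self (w (y + t • v) - w y)]
    simp only [g, zero_smul, add_zero, mul_zero]
    linarith
  have hone : (1 : ℝ) ∈ posTangentConeAt (Ici 0) 0 :=
    mem_posTangentConeAt_of_segment_subset (by simp [segment_eq_Icc, Icc_subset_Ici_self])
  have hslope : 0 ≤ u' v + K * ‖v‖ := by
    simpa using hgmin.hasFDerivWithinAt_nonneg hg.hasFDerivAt.hasFDerivWithinAt hone
  linarith

theorem HasFDerivAt.norm_le_of_isLocalMin_add_lipschitzWith {u w : E → ℝ}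
    {u' : E →L[ℝ] ℝ} {y : E} {K : ℝ≥0} (hu : HasFDerivAt u u' y) (hw : LipschitzWith K w)
    (hmin : IsLocalMin (fun z => u z + w z) y) : ‖u'‖ ≤ K := by
  have neg_le := hu.neg_le_of_isLocalMin_add_lipschitzWith hw hmin
  refine u'.opNorm_le_bound K.2 fun v => abs_le.2 ⟨?_, ?_⟩
  · linarith [neg_le v]
  · simpa using neg_le (-v)

theorem exists_eq_and_mul_dist_le_of_lt_norm_fderiv [ProperSpace E] {f : E → ℝ}
    (hf : Differentiable ℝ f) {c : ℝ} (hc : 0 < c) (hgrad : ∀ y, c < ‖fderiv ℝ f y‖)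
    (x : E) (h : ℝ) : ∃ y, f y = h ∧ c * dist y x ≤ |f x - h| := by
  set F : E → ℝ := fun z => |f z - h| + c * dist z x
  have hF : Continuous F :=
    (hf.continuous.sub continuous_const).abs.add
      (continuous_const.mul (continuous_id.dist continuous_const))
  have hcoercive : Tendsto F (cocompact E) atTop :=
    tendsto_atTop_mono (fun z => le_add_of_nonneg_left (abs_nonneg _))
      ((tendsto_dist_right_cocompact_atTop x).const_mul_atTop hc)
  obtain ⟨y, hy⟩ := hF.exists_forall_le hcoercive
  have hfy : f y = h := by
    by_contra hne
    have hu := ((hf y).hasFDerivAt.sub_const h).abs (sub_ne_zero.2 hne)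
    have hw : LipschitzWith (Real.toNNReal c) fun z => c * dist z x :=
      LipschitzWith.of_dist_le_mul fun a b => by
        rw [Real.dist_eq, ← mul_sub, abs_mul, abs_of_pos hc, Real.coe_toNNReal _ hc.le]
        exact mul_le_mul_of_nonneg_left (dist_dist_dist_le_left a b x) hc.le
    have hnorm := hu.norm_le_of_isLocalMin_add_lipschitzWith hw (Eventually.of_forall hy)
    rw [norm_smul, Real.coe_toNNReal _ hc.le] at hnorm
    have hsign : ‖(SignType.sign (f y - h) : ℝ)‖ = 1 := by
      rcases lt_or_gt_of_ne (sub_ne_zero.2 hne) with hneg | hpos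
      · simp [sign_neg hneg]
      · simp [sign_pos hpos]
    rw [hsign, one_mul] at hnorm
    exact (hgrad y).not_ge hnorm
  refine ⟨y, hfy, ?_⟩
  simpa [F, hfy] using hy x

theorem infDist_le_div_of_le_norm_fderiv [ProperSpace E] {f : E → ℝ}
    (hf : Differentiable ℝ f) {C : ℝ} (hC : 0 < C) (hgrad : ∀ y, C ≤ ‖fderiv ℝ f y‖)
    (x : E) (h : ℝ) : infDist x {y | f y = h} ≤ |f x - h| / C := by
  rw [le_div_iff₀ hC]
  -- The minimiser argument needs `c < C` strictly, so let `c` increase to `C`.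
  have hlt : ∀ c ∈ Ioo 0 C, infDist x {y | f y = h} * c ≤ |f x - h| := by
    rintro c ⟨hc, hcC⟩
    obtain ⟨y, hy, hdist⟩ := exists_eq_and_mul_dist_le_of_lt_norm_fderiv hf hc
      (fun z => hcC.trans_le (hgrad z)) x h
    calc infDist x {y | f y = h} * c ≤ dist x y * c :=
          mul_le_mul_of_nonneg_right (infDist_le_dist_of_mem hy) hc.le
      _ ≤ |f x - h| := by rwa [dist_comm, mul_comm]
  exact le_of_tendsto ((continuous_const.mul continuous_id).tendsto C |>.mono_left
    nhdsWithin_le_nhds) (eventually_of_mem (Ioo_mem_nhdsLT hC) hlt)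

theorem div_le_infDist_of_norm_fderiv_le {f : E → ℝ} (hf : Differentiable ℝ f) {C : ℝ}
    (hgrad : ∀ y, ‖fderiv ℝ f y‖ ≤ C) {h : ℝ} (hne : {y | f y = h}.Nonempty) (x : E) :
    |f x - h| / C ≤ infDist x {y | f y = h} := by
  refine (le_infDist hne).2 fun y (hy : f y = h) => div_le_of_le_mul₀
    ((norm_nonneg _).trans (hgrad x)) dist_nonneg ?_
  have := Convex.norm_image_sub_le_of_norm_fderiv_le (fun z _ => hf z) (fun z _ => hgrad z)
    convex_univ (mem_univ y) (mem_univ x)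
  rwa [hy, Real.norm_eq_abs, ← dist_eq_norm, mul_comm] at this

end NormedSpace

theorem norm_gradient_eq_norm_fderiv {E : Type*} [NormedAddCommGroup E] [InnerProductSpace ℝ E]
    [CompleteSpace E] (f : E → ℝ) (x : E) : ‖gradient f x‖ = ‖fderiv ℝ f x‖ :=
  (InnerProductSpace.toDual ℝ E).symm.norm_map _

theorem separation_between_level_sets_general
    (Φ : EuclideanSpace ℝ (Fin 2) → ℝ) (C₁ C₂ : ℝ)
    (hC₁ : 0 < C₁)
    (hdiff : Differentiable ℝ Φ)
    (hlow : ∀ x, C₁ ≤ ‖gradient Φ x‖)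
    (hhigh : ∀ x, ‖gradient Φ x‖ ≤ C₂) :
    ∀ h₁ h₂ : ℝ,
      ({y : EuclideanSpace ℝ (Fin 2) | Φ y = h₂}).Nonempty ∧
      ∀ x, Φ x = h₁ →
        |h₁ - h₂| / C₂ ≤ infDist x {y | Φ y = h₂} ∧
        infDist x {y | Φ y = h₂} ≤ |h₁ - h₂| / C₁ := by
  intro h₁ h₂
  simp only [norm_gradient_eq_norm_fderiv] at hlow hhigh
  obtain ⟨y, hy, -⟩ := exists_eq_and_mul_dist_le_of_lt_norm_fderiv hdiff (half_pos hC₁)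
    (fun z => (half_lt_self hC₁).trans_le (hlow z)) 0 h₂
  refine ⟨⟨y, hy⟩, fun x hx => ?_⟩
  subst hx
  exact ⟨div_le_infDist_of_norm_fderiv_le hdiff hhigh ⟨y, hy⟩ x,
    infDist_le_div_of_le_norm_fderiv hdiff hC₁ hlow x h₂⟩

/-- **Separation between level sets of an optical function.**
Let `Φ : ℝ² → ℝ` be differentiable with Lipschitz-continuous gradient, and suppose there are
constants `0 < C₁ ≤ C₂` with `C₁ ≤ |∇Φ(x)| ≤ C₂` for all `x`. Then for all `h₁, h₂` the level set
`{y : Φ y = h₂}` is nonempty, and for every `x` with `Φ x = h₁`,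
`|h₁ - h₂| / C₂ ≤ dist(x, {Φ = h₂}) ≤ |h₁ - h₂| / C₁`. -/
theorem separation_between_level_sets
    (Φ : EuclideanSpace ℝ (Fin 2) → ℝ) (C₁ C₂ : ℝ)
    (hC₁ : 0 < C₁) (hC₁₂ : C₁ ≤ C₂)
    (hdiff : Differentiable ℝ Φ)
    (hlip : ∃ L : ℝ≥0, LipschitzWith L (gradient Φ))
    (hlow : ∀ x, C₁ ≤ ‖gradient Φ x‖)
    (hhigh : ∀ x, ‖gradient Φ x‖ ≤ C₂) :
    ∀ h₁ h₂ : ℝ,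
      ({y : EuclideanSpace ℝ (Fin 2) | Φ y = h₂}).Nonempty ∧
      ∀ x, Φ x = h₁ →
        |h₁ - h₂| / C₂ ≤ infDist x {y | Φ y = h₂} ∧
        infDist x {y | Φ y = h₂} ≤ |h₁ - h₂| / C₁ :=
  separation_between_level_sets_general Φ C₁ C₂ hC₁ hdiff hlow hhigh
end

section
/- Comparison of optical functions for nearby symbols: Let C₁ ≥ 1 and δ > 0. Let a, ã : [−10,10] × ℝ² × (ℝ² ∖ {0}) → ℝ be positively homogeneous of degree 1 in ξ and C¹ in (x,ξ), with |∂_ξ a(t,x,ξ)| ≤ C₁ for |ξ| = 1, with ∂_ξ a Lipschitz in (x,ξ) on {|ξ| = 1} with constant C₁, and with |a(t,x,ξ) − ã(t,x,ξ)| ≤ δ |ξ| for all (t,x,ξ). Let Φ, Φ̃ ∈ C²([−10,10] × ℝ²) solve ∂_t Φ + a(t,x,∂_x Φ) = 0 and ∂_t Φ̃ + ã(t,x,∂_x Φ̃) = 0 with the same initial data Φ(0,·) = Φ̃(0,·), and assume throughout the slab that |∂²_{t,x} Φ|, |∂²_{t,x} Φ̃| ≤ C₁, that 1/2 ≤ |∂_x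 Φ| ≤ 2 and 1/2 ≤ |∂_x Φ̃| ≤ 2, and that |∂_x Φ − ∂_x Φ̃| ≤ 1/2. Then |Φ(t,x) − Φ̃(t,x)| ≤ C δ |t| for all (t,x) ∈ [−10,10] × ℝ², where C depends only on C₁. -/
open MeasureTheory Set
open scoped NNReal

noncomputable section

/-- Space `ℝ²`. -/
abbrev Sp : Type := EuclideanSpace ℝ (Fin 2)
/-- Spacetime `ℝ × ℝ²`. -/
abbrev Spacetime : Type := ℝ × Sp

/-- The spacetime slab `[−10,10] × ℝ²`. -/
def Slab : Set Spacetime := Icc (-10 : ℝ) 10 ×ˢ univ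

/-- The time derivative `∂_t Φ` (within the slab). -/
def dtW (Φ : Spacetime → ℝ) (z : Spacetime) : ℝ :=
  fderivWithin ℝ Φ Slab z ((1 : ℝ), (0 : Sp))

/-- The spatial gradient `∂_x Φ` (within the slab). -/
def gradxW (Φ : Spacetime → ℝ) (z : Spacetime) : Sp :=
  (WithLp.equiv 2 (Fin 2 → ℝ)).symm
    fun j => fderivWithin ℝ Φ Slab z ((0 : ℝ), EuclideanSpace.single j 1)

/-- The `ξ`-gradient `∂_ξ a` of a symbol `a(z, ξ)`. -/
def gradXi (a : Spacetime → Sp → ℝ) (z : Spacetime) (ξ : Sp) : Sp :=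
  (WithLp.equiv 2 (Fin 2 → ℝ)).symm
    fun j => fderiv ℝ (fun ξ' => a z ξ') ξ (EuclideanSpace.single j 1)

open Filter Topology

/-!
The difference `ψ = Φ - Φ̃` vanishes at `t = 0`, and subtracting the two eikonal equations gives the
transport inequality `|∂ₜψ| ≤ 2δ + C₁ |∂ₓψ|`: a `1`-homogeneous symbol with `|∂_ξ a| ≤ C₁` on the
unit sphere is `C₁`-Lipschitz along every segment of covectors avoiding the origin. Rather than
integrating along characteristics, we use a maximum principle. At a maximum point `x̄` of the
penalized profile `ψ(t, ·) - ε|x|²` the spatial gradient is `2εx̄ = O(√ε)`, and `∂ₓψ` is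
Lipschitz in `t`, so the maximum `m(t)` satisfies
`m(u) - m(s) ≤ |u - s| (2δ + O(√ε) + O(|u - s|))`; subdividing the time interval removes the
quadratic error, whence `m(t) ≤ (2δ + O(√ε)) |t|`. Letting `ε → 0` gives `ψ ≤ 2δ |t|`, and the
same argument applies to `-ψ`.
-/

section Penalization

variable {E : Type*} [NormedAddCommGroup E]

theorem exists_isMaxOn_sub_mul_sq_norm [ProperSpace E] {f : E → ℝ} {K ε : ℝ}
    (hf : Continuous f) (hK : ∀ x, f x ≤ K) (hε : 0 < ε) :
    ∃ x, IsMaxOn (fun y => f y - ε * ‖y‖ ^ 2) univ x := by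
  have hcoercive : Tendsto (fun y : E => ε * ‖y‖ ^ 2) (cocompact E) atTop :=
    ((tendsto_pow_atTop two_ne_zero).comp tendsto_norm_cocompact_atTop).const_mul_atTop hε
  have hcont : Continuous fun y => f y - ε * ‖y‖ ^ 2 := hf.sub (by fun_prop)
  obtain ⟨x, hx⟩ := hcont.exists_forall_ge' 0 <|
    (hcoercive.eventually_ge_atTop (K - f 0)).mono fun y hy => by
      show f y - ε * ‖y‖ ^ 2 ≤ f 0 - ε * ‖(0 : E)‖ ^ 2
      rw [norm_zero]; linarith [hK y]
  exact ⟨x, fun y _ => hx y⟩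

theorem IsMaxOn.norm_eq_of_hasFDerivAt_sub_mul_sq_norm [InnerProductSpace ℝ E] {f : E → ℝ}
    {f' : E →L[ℝ] ℝ} {ε : ℝ} {x : E} (hε : 0 ≤ ε) (hf : HasFDerivAt f f' x)
    (hmax : IsMaxOn (fun y => f y - ε * ‖y‖ ^ 2) univ x) :
    ‖f'‖ = 2 * ε * ‖x‖ := by
  have hzero := (hmax.isLocalMax univ_mem).hasFDerivAt_eq_zero
    (hf.sub ((hasStrictFDerivAt_norm_sq x).hasFDerivAt.const_mul ε))
  rw [sub_eq_zero] at hzero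
  rw [hzero, two_nsmul, ← two_smul ℝ, smul_smul, norm_smul, innerSL_apply_norm,
    Real.norm_of_nonneg (by positivity)]
  ring

end Penalization

theorem sub_le_mul_abs_of_forall_sub_le {f : ℝ → ℝ} {I : Set ℝ} (hI : I.OrdConnected)
    {A B : ℝ} (h : ∀ s ∈ I, ∀ t ∈ I, f t - f s ≤ |t - s| * (A + B * |t - s|))
    {s t : ℝ} (hs : s ∈ I) (ht : t ∈ I) :
    f t - f s ≤ A * |t - s| := by
  -- along `n + 1` equal steps the quadratic error adds up to `B |t - s|² / (n + 1)`
  have hstep : ∀ n : ℕ, f t - f s ≤ A * |t - s| + B * |t - s| ^ 2 * (1 / ((n : ℝ) + 1)) := by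
    intro n
    have hn : (0 : ℝ) < n + 1 := by positivity
    set p : ℕ → ℝ := fun k => s + (k / ((n : ℝ) + 1)) • (t - s)
    have hp : ∀ k ≤ n + 1, p k ∈ I := fun k hk =>
      hI.convex.add_smul_sub_mem hs ht ⟨by positivity,
        div_le_one_of_le₀ (by exact_mod_cast hk) hn.le⟩
    have hincr : ∀ k, |p (k + 1) - p k| = |t - s| / ((n : ℝ) + 1) := fun k => by
      simp only [p, smul_eq_mul, Nat.cast_add, Nat.cast_one]
      rw [show s + (k + 1) / ((n : ℝ) + 1) * (t - s) - (s + k / ((n : ℝ) + 1) * (t - s))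
        = (t - s) / ((n : ℝ) + 1) by field_simp; ring, abs_div, abs_of_pos hn]
    calc f t - f s = ∑ k ∈ Finset.range (n + 1), (f (p (k + 1)) - f (p k)) := by
          rw [Finset.sum_range_sub (fun k => f (p k))]; simp [p, hn.ne']
      _ ≤ ∑ k ∈ Finset.range (n + 1),
            |t - s| / ((n : ℝ) + 1) * (A + B * (|t - s| / ((n : ℝ) + 1))) := by
          refine Finset.sum_le_sum fun k hk => ?_
          have hk := Finset.mem_range.1 hk
          simpa only [hincr] using h _ (hp k hk.le) _ (hp (k + 1) hk)
      _ = A * |t - s| + B * |t - s| ^ 2 * (1 / ((n : ℝ) + 1)) := by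
          rw [Finset.sum_const, Finset.card_range, nsmul_eq_mul]; push_cast
          field_simp
  have hlim : Tendsto (fun n : ℕ => A * |t - s| + B * |t - s| ^ 2 * (1 / ((n : ℝ) + 1)))
      atTop (𝓝 (A * |t - s|)) := by
    have := (tendsto_const_nhds (x := A * |t - s|)).add
      (tendsto_one_div_add_atTop_nhds_zero_nat.const_mul (B * |t - s| ^ 2))
    rwa [mul_zero, add_zero] at this
  exact ge_of_tendsto' hlim hstep

section TransportInequality

variable {E : Type*} [NormedAddCommGroup E] [InnerProductSpace ℝ E]
  {I : Set ℝ} {ψ ψ_t : ℝ → E → ℝ} {ψ_x : ℝ → E → E →L[ℝ] ℝ} {A L L' K : ℝ}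

theorem abs_sub_le_of_transport_ineq (hI : I.OrdConnected) (hL : 0 ≤ L) (hL' : 0 ≤ L')
    (hψ_t : ∀ t ∈ I, ∀ x, HasDerivWithinAt (ψ · x) (ψ_t t x) I t)
    (hineq : ∀ t ∈ I, ∀ x, |ψ_t t x| ≤ A + L * ‖ψ_x t x‖)
    (hψ_x_lip : ∀ s ∈ I, ∀ t ∈ I, ∀ x, ‖ψ_x s x - ψ_x t x‖ ≤ L' * |s - t|)
    {s t : ℝ} (hs : s ∈ I) (ht : t ∈ I) (x : E) :
    |ψ s x - ψ t x| ≤ |s - t| * (A + L * ‖ψ_x t x‖ + L * L' * |s - t|) := by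
  have hsub : uIcc s t ⊆ I := hI.uIcc_subset hs ht
  have hbound : ∀ r ∈ uIcc s t, ‖ψ_t r x‖ ≤ A + L * ‖ψ_x t x‖ + L * L' * |s - t| := by
    intro r hr
    have hdrift : ‖ψ_x r x‖ ≤ ‖ψ_x t x‖ + L' * |s - t| :=
      calc ‖ψ_x r x‖ ≤ ‖ψ_x t x‖ + ‖ψ_x r x - ψ_x t x‖ := norm_le_insert' _ _
        _ ≤ ‖ψ_x t x‖ + L' * |r - t| := by gcongr; exact hψ_x_lip r (hsub hr) t ht x
        _ ≤ ‖ψ_x t x‖ + L' * |s - t| := by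
          have := abs_sub_right_of_mem_uIcc hr
          rw [abs_sub_comm t r, abs_sub_comm t s] at this
          gcongr
    calc ‖ψ_t r x‖ ≤ A + L * ‖ψ_x r x‖ := hineq r (hsub hr) x
      _ ≤ A + L * (‖ψ_x t x‖ + L' * |s - t|) := by gcongr
      _ = A + L * ‖ψ_x t x‖ + L * L' * |s - t| := by ring
  have := (convex_uIcc s t).norm_image_sub_le_of_norm_hasDerivWithin_le
    (fun r hr => (hψ_t r (hsub hr) x).mono hsub) hbound right_mem_uIcc left_mem_uIcc
  rwa [Real.norm_eq_abs, Real.norm_eq_abs, mul_comm] at this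

theorem le_mul_abs_of_transport_ineq [ProperSpace E] (hI : I.OrdConnected) (hL : 0 ≤ L)
    (hL' : 0 ≤ L')
    (hψ_t : ∀ t ∈ I, ∀ x, HasDerivWithinAt (ψ · x) (ψ_t t x) I t)
    (hψ_x : ∀ t ∈ I, ∀ x, HasFDerivAt (ψ t) (ψ_x t x) x)
    (hineq : ∀ t ∈ I, ∀ x, |ψ_t t x| ≤ A + L * ‖ψ_x t x‖)
    (hψ_x_lip : ∀ s ∈ I, ∀ t ∈ I, ∀ x, ‖ψ_x s x - ψ_x t x‖ ≤ L' * |s - t|)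
    (hbdd : ∀ t ∈ I, ∀ x, |ψ t x| ≤ K) {t₀ : ℝ} (ht₀ : t₀ ∈ I) (h₀ : ∀ x, ψ t₀ x ≤ 0)
    {t : ℝ} (ht : t ∈ I) (x : E) :
    ψ t x ≤ A * |t - t₀| := by
  set g : ℝ → ℝ := fun ε => (A + L * (2 * √(2 * K * ε))) * |t - t₀| + ε * ‖x‖ ^ 2
  suffices hg : ∀ ε > 0, ψ t x ≤ g ε by
    have hlim : Tendsto g (𝓝[>] 0) (𝓝 (A * |t - t₀|)) := by
      simpa [g] using ((by fun_prop : Continuous g).tendsto 0).mono_left nhdsWithin_le_nhds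
    exact ge_of_tendsto hlim (eventually_nhdsWithin_of_forall hg)
  intro ε hε
  have hmax : ∀ s ∈ I, ∃ y, IsMaxOn (fun y => ψ s y - ε * ‖y‖ ^ 2) univ y := fun s hs =>
    exists_isMaxOn_sub_mul_sq_norm
      (continuous_iff_continuousAt.2 fun y => (hψ_x s hs y).continuousAt)
      (fun y => (abs_le.1 (hbdd s hs y)).2) hε
  choose! X hX using hmax
  set m : ℝ → ℝ := fun s => ψ s (X s) - ε * ‖X s‖ ^ 2
  have hgrad : ∀ s ∈ I, ‖ψ_x s (X s)‖ ≤ 2 * √(2 * K * ε) := by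
    intro s hs
    rw [(hX s hs).norm_eq_of_hasFDerivAt_sub_mul_sq_norm hε.le (hψ_x s hs (X s))]
    -- comparing with `y = 0` gives `ε ‖X s‖² ≤ 2K`, so the gradient `2ε X s` is `O(√ε)`
    have hcmp := isMaxOn_univ_iff.1 (hX s hs) 0
    simp only [norm_zero] at hcmp
    have hpen : ε * ‖X s‖ ^ 2 ≤ 2 * K := by
      linarith [abs_le.1 (hbdd s hs 0), abs_le.1 (hbdd s hs (X s))]
    have : ε * ‖X s‖ ≤ √(2 * K * ε) := Real.le_sqrt_of_sq_le (by nlinarith)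
    linarith
  have hm : ∀ s ∈ I, ∀ u ∈ I,
      m u - m s ≤ |u - s| * (A + L * (2 * √(2 * K * ε)) + L * L' * |u - s|) := by
    intro s hs u hu
    have hstep : m u - m s ≤ ψ u (X u) - ψ s (X u) := by
      have := isMaxOn_univ_iff.1 (hX s hs) (X u)
      simp only [m]; linarith
    have hmvt := abs_sub_le_of_transport_ineq hI hL hL' hψ_t hineq hψ_x_lip hs hu (X u)
    rw [abs_sub_comm s u] at hmvt
    calc m u - m s ≤ |ψ u (X u) - ψ s (X u)| := hstep.trans (le_abs_self _)
      _ ≤ |u - s| * (A + L * ‖ψ_x u (X u)‖ + L * L' * |u - s|) := abs_sub_comm (ψ s _) _ ▸ hmvt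
      _ ≤ |u - s| * (A + L * (2 * √(2 * K * ε)) + L * L' * |u - s|) := by
          gcongr; exact hgrad u hu
  have hm₀ : m t₀ ≤ 0 := by
    have := h₀ (X t₀)
    have := mul_nonneg hε.le (sq_nonneg ‖X t₀‖)
    simp only [m]; linarith
  have hx : ψ t x - ε * ‖x‖ ^ 2 ≤ m t := isMaxOn_univ_iff.1 (hX t ht) x
  have hmt := sub_le_mul_abs_of_forall_sub_le hI hm ht₀ ht
  simp only [g]
  linarith

theorem abs_le_mul_abs_of_transport_ineq [ProperSpace E] (hI : I.OrdConnected) (hL : 0 ≤ L)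
    (hL' : 0 ≤ L')
    (hψ_t : ∀ t ∈ I, ∀ x, HasDerivWithinAt (ψ · x) (ψ_t t x) I t)
    (hψ_x : ∀ t ∈ I, ∀ x, HasFDerivAt (ψ t) (ψ_x t x) x)
    (hineq : ∀ t ∈ I, ∀ x, |ψ_t t x| ≤ A + L * ‖ψ_x t x‖)
    (hψ_x_lip : ∀ s ∈ I, ∀ t ∈ I, ∀ x, ‖ψ_x s x - ψ_x t x‖ ≤ L' * |s - t|)
    (hbdd : ∀ t ∈ I, ∀ x, |ψ t x| ≤ K) {t₀ : ℝ} (ht₀ : t₀ ∈ I) (h₀ : ∀ x, ψ t₀ x = 0)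
    {t : ℝ} (ht : t ∈ I) (x : E) :
    |ψ t x| ≤ A * |t - t₀| := by
  refine abs_le.2 ⟨neg_le.1 ?_, le_mul_abs_of_transport_ineq hI hL hL' hψ_t hψ_x hineq hψ_x_lip
    hbdd ht₀ (fun x => (h₀ x).le) ht x⟩
  refine le_mul_abs_of_transport_ineq (ψ := fun s y => -ψ s y) (ψ_t := fun s y => -ψ_t s y)
    (ψ_x := fun s y => -ψ_x s y) (K := K) hI hL hL' (fun s hs y => (hψ_t s hs y).neg)
    (fun s hs y => (hψ_x s hs y).neg) (fun s hs y => ?_) (fun s hs r hr y => ?_)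
    (fun s hs y => ?_) ht₀ (fun y => by simp [h₀ y]) ht x
  · simpa only [abs_neg, norm_neg] using hineq s hs y
  · simpa only [neg_sub_neg, norm_sub_rev] using hψ_x_lip s hs r hr y
  · simpa only [abs_neg] using hbdd s hs y

end TransportInequality

section Homogeneous

variable {E : Type*} [NormedAddCommGroup E] [NormedSpace ℝ E] {g : E → ℝ} {C : ℝ}

theorem fderiv_smul_eq_of_homogeneous (hhom : ∀ ξ ≠ 0, ∀ c : ℝ, 0 < c → g (c • ξ) = c * g ξ)
    (hdiff : ∀ ξ ≠ 0, DifferentiableAt ℝ g ξ) {ξ : E} (hξ : ξ ≠ 0) {c : ℝ} (hc : 0 < c) :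
    fderiv ℝ g (c • ξ) = fderiv ℝ g ξ := by
  have hchain : HasFDerivAt (fun η => g (c • η)) (c • fderiv ℝ g (c • ξ)) ξ := by
    simpa [Function.comp_def] using (hdiff _ (smul_ne_zero hc.ne' hξ)).hasFDerivAt.comp ξ
      ((hasFDerivAt_id ξ).const_smul c)
  have hscaled : HasFDerivAt (fun η => g (c • η)) (c • fderiv ℝ g ξ) ξ :=
    ((hdiff ξ hξ).hasFDerivAt.const_mul c).congr_of_eventuallyEq <|
      eventually_of_mem (isOpen_ne.mem_nhds hξ) fun η hη => hhom η hη c hc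
  exact smul_right_injective _ hc.ne' (hchain.unique hscaled)

theorem norm_fderiv_le_of_homogeneous (hhom : ∀ ξ ≠ 0, ∀ c : ℝ, 0 < c → g (c • ξ) = c * g ξ)
    (hdiff : ∀ ξ ≠ 0, DifferentiableAt ℝ g ξ) (hC : ∀ u : E, ‖u‖ = 1 → ‖fderiv ℝ g u‖ ≤ C)
    {ξ : E} (hξ : ξ ≠ 0) : ‖fderiv ℝ g ξ‖ ≤ C := by
  have hu : ‖‖ξ‖⁻¹ • ξ‖ = 1 := norm_smul_inv_norm hξ
  have hscale := fderiv_smul_eq_of_homogeneous hhom hdiff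
    (ne_zero_of_norm_ne_zero (hu ▸ one_ne_zero)) (norm_pos_iff.2 hξ)
  rw [smul_inv_smul₀ (norm_ne_zero_iff.2 hξ)] at hscale
  exact hscale ▸ hC _ hu

theorem norm_add_norm_sub_norm_sub_le_two_mul_norm_of_mem_segment {ξ η θ : E}
    (hθ : θ ∈ segment ℝ η ξ) : ‖ξ‖ + ‖η‖ - ‖ξ - η‖ ≤ 2 * ‖θ‖ := by
  obtain ⟨p, q, hp, hq, hpq, rfl⟩ := hθ
  obtain rfl : p = 1 - q := by linarith
  have hη : ‖η‖ ≤ ‖(1 - q) • η + q • ξ‖ + q * ‖ξ - η‖ :=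
    calc ‖η‖ = ‖((1 - q) • η + q • ξ) - q • (ξ - η)‖ := by congr 1; module
      _ ≤ _ := norm_sub_le _ _
      _ = _ := by rw [norm_smul, Real.norm_of_nonneg hq]
  have hξ : ‖ξ‖ ≤ ‖(1 - q) • η + q • ξ‖ + (1 - q) * ‖ξ - η‖ :=
    calc ‖ξ‖ = ‖((1 - q) • η + q • ξ) + (1 - q) • (ξ - η)‖ := by congr 1; module
      _ ≤ _ := norm_add_le _ _
      _ = _ := by rw [norm_smul, Real.norm_of_nonneg hp]
  linarith [show (1 - q) * ‖ξ - η‖ + q * ‖ξ - η‖ = ‖ξ - η‖ by ring]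

-- `‖ξ - η‖ < ‖ξ‖ + ‖η‖` says exactly that the segment `[η, ξ]` avoids the origin.
theorem abs_sub_le_of_homogeneous (hhom : ∀ ξ ≠ 0, ∀ c : ℝ, 0 < c → g (c • ξ) = c * g ξ)
    (hdiff : ∀ ξ ≠ 0, DifferentiableAt ℝ g ξ) (hC : ∀ u : E, ‖u‖ = 1 → ‖fderiv ℝ g u‖ ≤ C)
    {ξ η : E} (hξη : ‖ξ - η‖ < ‖ξ‖ + ‖η‖) : |g ξ - g η| ≤ C * ‖ξ - η‖ := by
  have hseg : ∀ θ ∈ segment ℝ η ξ, θ ≠ 0 := fun θ hθ hθ0 => by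
    have := norm_add_norm_sub_norm_sub_le_two_mul_norm_of_mem_segment hθ
    rw [hθ0, norm_zero] at this
    linarith
  simpa only [Real.norm_eq_abs] using
    (convex_segment η ξ).norm_image_sub_le_of_norm_hasFDerivWithin_le
    (fun θ hθ => (hdiff θ (hseg θ hθ)).hasFDerivAt.hasFDerivWithinAt)
    (fun θ hθ => norm_fderiv_le_of_homogeneous hhom hdiff hC (hseg θ hθ))
    (left_mem_segment ℝ η ξ) (right_mem_segment ℝ η ξ)

end Homogeneous

theorem EuclideanSpace.toDual_symm_eq {ι : Type*} [Fintype ι] [DecidableEq ι]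
    (L : StrongDual ℝ (EuclideanSpace ℝ ι)) :
    (InnerProductSpace.toDual ℝ (EuclideanSpace ℝ ι)).symm L =
      (WithLp.equiv 2 (ι → ℝ)).symm fun j => L (EuclideanSpace.single j 1) := by
  ext j
  have := EuclideanSpace.inner_single_left j (1 : ℝ) ((InnerProductSpace.toDual ℝ _).symm L)
  rw [real_inner_comm, InnerProductSpace.toDual_symm_apply] at this
  simpa using this.symm

theorem Convex.norm_fderivWithin_sub_le_of_norm_iteratedFDerivWithin_two_le
    {E F : Type*} [NormedAddCommGroup E] [NormedSpace ℝ E] [NormedAddCommGroup F]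
    [NormedSpace ℝ F] {f : E → F} {s : Set E} {C : ℝ} (hs : Convex ℝ s) (hs' : UniqueDiffOn ℝ s)
    (hf : ContDiffOn ℝ 2 f s) (hC : ∀ x ∈ s, ‖iteratedFDerivWithin ℝ 2 f s x‖ ≤ C)
    {x y : E} (hx : x ∈ s) (hy : y ∈ s) :
    ‖fderivWithin ℝ f s y - fderivWithin ℝ f s x‖ ≤ C * ‖y - x‖ :=
  hs.norm_image_sub_le_of_norm_fderivWithin_le
    ((hf.fderivWithin hs' (m := 1) (by norm_num)).differentiableOn one_ne_zero)
    (fun z hz => by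
      rw [← norm_iteratedFDerivWithin_one _ (hs' z hz),
        norm_iteratedFDerivWithin_fderivWithin hs' hz]
      exact hC z hz)
    hx hy

section Slices

variable {E F : Type*} [NormedAddCommGroup E] [NormedSpace ℝ E] [NormedAddCommGroup F]
  [NormedSpace ℝ F] {f : ℝ × E → F} {f' : ℝ × E →L[ℝ] F} {I : Set ℝ} {t : ℝ} {x : E}

theorem HasFDerivWithinAt.hasDerivWithinAt_fst_slice
    (h : HasFDerivWithinAt f f' (I ×ˢ univ) (t, x)) :
    HasDerivWithinAt (fun s => f (s, x)) (f' (1, 0)) I t :=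
  h.comp_hasDerivWithinAt t ((hasDerivAt_id t).prodMk (hasDerivAt_const t x)).hasDerivWithinAt
    fun _ hs => mk_mem_prod hs (mem_univ x)

theorem HasFDerivWithinAt.hasFDerivAt_snd_slice
    (h : HasFDerivWithinAt f f' (I ×ˢ univ) (t, x)) (ht : t ∈ I) :
    HasFDerivAt (fun y => f (t, y)) (f'.comp (ContinuousLinearMap.inr ℝ ℝ E)) x :=
  hasFDerivWithinAt_univ.1 <|
    h.comp x (hasFDerivAt_prodMk_right t x).hasFDerivWithinAt fun y _ => mk_mem_prod ht (mem_univ y)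

end Slices

theorem mk_mem_slab {t : ℝ} (ht : t ∈ Icc (-10 : ℝ) 10) (x : Sp) : ((t, x) : Spacetime) ∈ Slab :=
  ⟨ht, mem_univ x⟩

theorem convex_slab : Convex ℝ Slab := (convex_Icc _ _).prod convex_univ

theorem uniqueDiffOn_slab : UniqueDiffOn ℝ Slab :=
  uniqueDiffOn_convex convex_slab (⟨(0, 0), by
    rw [Slab, interior_prod_eq, interior_univ, interior_Icc]
    exact ⟨by norm_num, mem_univ _⟩⟩ : (interior Slab).Nonempty)

theorem gradxW_eq_toDual_symm (Φ : Spacetime → ℝ) (z : Spacetime) :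
    gradxW Φ z = (InnerProductSpace.toDual ℝ Sp).symm
      ((fderivWithin ℝ Φ Slab z).comp (ContinuousLinearMap.inr ℝ ℝ Sp)) := by
  rw [EuclideanSpace.toDual_symm_eq]; rfl

theorem norm_gradxW (Φ : Spacetime → ℝ) (z : Spacetime) :
    ‖gradxW Φ z‖ = ‖(fderivWithin ℝ Φ Slab z).comp (ContinuousLinearMap.inr ℝ ℝ Sp)‖ := by
  rw [gradxW_eq_toDual_symm, LinearIsometryEquiv.norm_map]

theorem norm_gradXi (a : Spacetime → Sp → ℝ) (z : Spacetime) (ξ : Sp) :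
    ‖gradXi a z ξ‖ = ‖fderiv ℝ (a z) ξ‖ := by
  rw [gradXi, ← EuclideanSpace.toDual_symm_eq, LinearIsometryEquiv.norm_map]

section Difference

variable {Φ Ψ : Spacetime → ℝ} {z : Spacetime}

theorem fderivWithin_slab_sub (hΦ : DifferentiableWithinAt ℝ Φ Slab z)
    (hΨ : DifferentiableWithinAt ℝ Ψ Slab z) (hz : z ∈ Slab) :
    fderivWithin ℝ (Φ - Ψ) Slab z = fderivWithin ℝ Φ Slab z - fderivWithin ℝ Ψ Slab z :=
  fderivWithin_sub (uniqueDiffOn_slab z hz) hΦ hΨ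

theorem dtW_sub (hΦ : DifferentiableWithinAt ℝ Φ Slab z)
    (hΨ : DifferentiableWithinAt ℝ Ψ Slab z) (hz : z ∈ Slab) :
    dtW (Φ - Ψ) z = dtW Φ z - dtW Ψ z := by
  rw [dtW, dtW, dtW, fderivWithin_slab_sub hΦ hΨ hz]; rfl

theorem gradxW_sub (hΦ : DifferentiableWithinAt ℝ Φ Slab z)
    (hΨ : DifferentiableWithinAt ℝ Ψ Slab z) (hz : z ∈ Slab) :
    gradxW (Φ - Ψ) z = gradxW Φ z - gradxW Ψ z := by
  simp only [gradxW_eq_toDual_symm, fderivWithin_slab_sub hΦ hΨ hz,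
    ContinuousLinearMap.sub_comp, map_sub]

end Difference

theorem abs_le_mul_abs_of_abs_dtW_le {u : Spacetime → ℝ} {A L M G : ℝ} (hL : 0 ≤ L)
    (hu : ContDiffOn ℝ 2 u Slab) (hu₂ : ∀ z ∈ Slab, ‖iteratedFDerivWithin ℝ 2 u Slab z‖ ≤ M)
    (hineq : ∀ z ∈ Slab, |dtW u z| ≤ A + L * ‖gradxW u z‖)
    (hgrad : ∀ z ∈ Slab, ‖gradxW u z‖ ≤ G) (h₀ : ∀ x, u (0, x) = 0)
    {z : Spacetime} (hz : z ∈ Slab) : |u z| ≤ A * |z.1| := by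
  set D := fderivWithin ℝ u Slab
  have hD : ∀ w ∈ Slab, HasFDerivWithinAt u (D w) Slab w := fun w hw =>
    (hu.differentiableOn (by norm_num) w hw).hasFDerivWithinAt
  have hψ_t : ∀ t ∈ Icc (-10 : ℝ) 10, ∀ x,
      HasDerivWithinAt (fun s => u (s, x)) (dtW u (t, x)) (Icc (-10 : ℝ) 10) t :=
    fun t ht x => (hD _ (mk_mem_slab ht x)).hasDerivWithinAt_fst_slice
  have hψ_x : ∀ t ∈ Icc (-10 : ℝ) 10, ∀ x,
      HasFDerivAt (fun y => u (t, y)) ((D (t, x)).comp (ContinuousLinearMap.inr ℝ ℝ Sp)) x :=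
    fun t ht x => (hD _ (mk_mem_slab ht x)).hasFDerivAt_snd_slice ht
  have hineq' : ∀ t ∈ Icc (-10 : ℝ) 10, ∀ x,
      |dtW u (t, x)| ≤ A + L * ‖(D (t, x)).comp (ContinuousLinearMap.inr ℝ ℝ Sp)‖ :=
    fun t ht x => norm_gradxW u (t, x) ▸ hineq _ (mk_mem_slab ht x)
  have hM : 0 ≤ M := (norm_nonneg _).trans (hu₂ z hz)
  have hlip : ∀ s ∈ Icc (-10 : ℝ) 10, ∀ t ∈ Icc (-10 : ℝ) 10, ∀ x,
      ‖(D (s, x)).comp (ContinuousLinearMap.inr ℝ ℝ Sp) -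
        (D (t, x)).comp (ContinuousLinearMap.inr ℝ ℝ Sp)‖ ≤ M * |s - t| := by
    intro s hs t ht x
    rw [← ContinuousLinearMap.sub_comp]
    calc _ ≤ ‖D (s, x) - D (t, x)‖ * ‖ContinuousLinearMap.inr ℝ ℝ Sp‖ :=
          ContinuousLinearMap.opNorm_comp_le _ _
      _ ≤ ‖D (s, x) - D (t, x)‖ := mul_le_of_le_one_right (norm_nonneg _)
          (ContinuousLinearMap.norm_inr_le_one _ _ _)
      _ ≤ M * ‖((s, x) : Spacetime) - (t, x)‖ :=
          convex_slab.norm_fderivWithin_sub_le_of_norm_iteratedFDerivWithin_two_le uniqueDiffOn_slab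
            hu hu₂ (mk_mem_slab ht x) (mk_mem_slab hs x)
      _ = M * |s - t| := by simp [Prod.norm_def]
  have h0I : (0 : ℝ) ∈ Icc (-10 : ℝ) 10 := by norm_num
  have hbdd : ∀ t ∈ Icc (-10 : ℝ) 10, ∀ x, |u (t, x)| ≤ 10 * (A + L * G + L * M * 10) := by
    intro t ht x
    have hmvt := abs_sub_le_of_transport_ineq (ψ := fun s y => u (s, y)) Set.ordConnected_Icc hL hM
      hψ_t hineq' hlip ht h0I x
    have ht10 : |t - 0| ≤ 10 := by rw [sub_zero, abs_le]; exact ht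
    have hG := norm_gradxW u (0, x) ▸ hgrad _ (mk_mem_slab h0I x)
    have hpos : 0 ≤ A + L * ‖(D (0, x)).comp (ContinuousLinearMap.inr ℝ ℝ Sp)‖ :=
      (abs_nonneg _).trans (hineq' 0 h0I x)
    simp only [h₀, sub_zero] at hmvt ht10
    calc |u (t, x)| ≤ |t| * (A + L * ‖(D (0, x)).comp (ContinuousLinearMap.inr ℝ ℝ Sp)‖
          + L * M * |t|) := hmvt
      _ ≤ 10 * (A + L * G + L * M * 10) := by gcongr
  simpa using abs_le_mul_abs_of_transport_ineq (ψ := fun s y => u (s, y)) Set.ordConnected_Icc hL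
    hM hψ_t hψ_x hineq' hlip hbdd h0I h₀ hz.1 z.2

/-- **Comparison of optical functions for nearby symbols.** If `a, aTld` are 1-homogeneous symbols
that are `C¹` in `(x,ξ)` with `|∂_ξ a| ≤ C₁` and `∂_ξ a` Lipschitz on the unit sphere bundle,
`|a − aTld| ≤ δ|ξ|`, and `Φ, Φ̃` solve the respective eikonal equations with the same data and
satisfy the listed pointwise bounds, then `|Φ − Φ̃| ≤ C δ |t|` with `C = C(C₁)`. -/
theorem comparison_of_optical_functions (C₁ : ℝ) (hC₁ : 1 ≤ C₁) :
    ∃ C > 0, ∀ δ : ℝ, 0 < δ →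
      ∀ (a aTld : Spacetime → Sp → ℝ) (Φ Φt : Spacetime → ℝ),
      -- positive 1-homogeneity in ξ
      (∀ z ∈ Slab, ∀ ξ : Sp, ξ ≠ 0 → ∀ c : ℝ, 0 < c → a z (c • ξ) = c * a z ξ) →
      (∀ z ∈ Slab, ∀ ξ : Sp, ξ ≠ 0 → ∀ c : ℝ, 0 < c → aTld z (c • ξ) = c * aTld z ξ) →
      -- C¹ in (x, ξ)
      (∀ t ∈ Icc (-10 : ℝ) 10,
        ContDiffOn ℝ 1 (fun p : Sp × Sp => a (t, p.1) p.2) {p : Sp × Sp | p.2 ≠ 0}) →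
      (∀ t ∈ Icc (-10 : ℝ) 10,
        ContDiffOn ℝ 1 (fun p : Sp × Sp => aTld (t, p.1) p.2) {p : Sp × Sp | p.2 ≠ 0}) →
      -- |∂_ξ a| ≤ C₁ on the unit sphere bundle
      (∀ z ∈ Slab, ∀ ξ : Sp, ‖ξ‖ = 1 → ‖gradXi a z ξ‖ ≤ C₁) →
      -- ∂_ξ a is Lipschitz in (x, ξ) on {|ξ| = 1} with constant C₁
      (∀ t ∈ Icc (-10 : ℝ) 10,
        LipschitzOnWith (Real.toNNReal C₁) (fun p : Sp × Sp => gradXi a (t, p.1) p.2)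
          {p : Sp × Sp | ‖p.2‖ = 1}) →
      -- |a − aTld| ≤ δ |ξ|
      (∀ z ∈ Slab, ∀ ξ : Sp, |a z ξ - aTld z ξ| ≤ δ * ‖ξ‖) →
      -- Φ, Φ̃ ∈ C²([−10,10] × ℝ²) solve the eikonal equations with the same data
      ContDiffOn ℝ 2 Φ Slab → ContDiffOn ℝ 2 Φt Slab →
      (∀ z ∈ Slab, dtW Φ z + a z (gradxW Φ z) = 0) →
      (∀ z ∈ Slab, dtW Φt z + aTld z (gradxW Φt z) = 0) →
      (∀ x : Sp, Φ (0, x) = Φt (0, x)) →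
      -- pointwise bounds throughout the slab
      (∀ z ∈ Slab, ‖iteratedFDerivWithin ℝ 2 Φ Slab z‖ ≤ C₁) →
      (∀ z ∈ Slab, ‖iteratedFDerivWithin ℝ 2 Φt Slab z‖ ≤ C₁) →
      (∀ z ∈ Slab, 1 / 2 ≤ ‖gradxW Φ z‖ ∧ ‖gradxW Φ z‖ ≤ 2) →
      (∀ z ∈ Slab, 1 / 2 ≤ ‖gradxW Φt z‖ ∧ ‖gradxW Φt z‖ ≤ 2) →
      (∀ z ∈ Slab, ‖gradxW Φ z - gradxW Φt z‖ ≤ 1 / 2) →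
      -- conclusion
      ∀ z ∈ Slab, |Φ z - Φt z| ≤ C * δ * |z.1| := by
  refine ⟨2, two_pos, fun δ hδ a aTld Φ Φt hHa _ hC1a _ hGb _ hab hΦ hΦt heik heikt hinit hD2Φ hD2Φt
    hgΦ hgΦt hgd z hz => ?_⟩
  have hdiff := hΦ.differentiableOn (by norm_num)
  have hdifft := hΦt.differentiableOn (by norm_num)
  have hgrad : ∀ w ∈ Slab, gradxW (Φ - Φt) w = gradxW Φ w - gradxW Φt w := fun w hw =>
    gradxW_sub (hdiff w hw) (hdifft w hw) hw
  have hadiff : ∀ w ∈ Slab, ∀ ξ : Sp, ξ ≠ 0 → DifferentiableAt ℝ (a w) ξ := fun w hw ξ hξ =>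
    (((hC1a w.1 hw.1).differentiableOn one_ne_zero).differentiableAt
      ((isOpen_ne.preimage continuous_snd).mem_nhds hξ)).comp ξ
      ((differentiableAt_const w.2).prodMk differentiableAt_id)
  have hineq : ∀ w ∈ Slab, |dtW (Φ - Φt) w| ≤ 2 * δ + C₁ * ‖gradxW (Φ - Φt) w‖ := by
    intro w hw
    rw [dtW_sub (hdiff w hw) (hdifft w hw) hw, hgrad w hw]
    -- `∂ₜψ = ã(∇Φ̃) - a(∇Φ)`: compare `ã` with `a` at `∇Φ̃`, then `a` along `[∇Φ̃, ∇Φ]`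
    have hsymb := abs_sub_le_of_homogeneous (hHa w hw) (hadiff w hw)
      (fun u hu => norm_gradXi a w u ▸ hGb w hw u hu) (ξ := gradxW Φ w) (η := gradxW Φt w)
      (by linarith [hgd w hw, (hgΦ w hw).1, (hgΦt w hw).1])
    have hclose := hab w hw (gradxW Φt w)
    have hδ2 : δ * ‖gradxW Φt w‖ ≤ 2 * δ := by nlinarith [(hgΦt w hw).2]
    rw [abs_le] at hsymb hclose ⊢
    constructor <;> linarith [heik w hw, heikt w hw]
  have hu₂ : ∀ w ∈ Slab, ‖iteratedFDerivWithin ℝ 2 (Φ - Φt) Slab w‖ ≤ 2 * C₁ := fun w hw => by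
    rw [iteratedFDerivWithin_sub_apply (hΦ w hw) (hΦt w hw) uniqueDiffOn_slab hw]
    linarith [norm_sub_le (iteratedFDerivWithin ℝ 2 Φ Slab w) (iteratedFDerivWithin ℝ 2 Φt Slab w),
      hD2Φ w hw, hD2Φt w hw]
  have := abs_le_mul_abs_of_abs_dtW_le (by linarith) (hΦ.sub hΦt) hu₂ hineq
    (fun w hw => hgrad w hw ▸ hgd w hw) (fun x => sub_eq_zero.2 (hinit x)) hz
  simpa only [Pi.sub_apply] using this
end
end

section
/- Microellipticity of one-homogeneous symbols at angular separation: Let n ≥ 2 and let a : ℝⁿ ∖ {0} → ℝ be smooth, positively homogeneous of degree 1, with a(ξ) > 0 for all ξ ≠ 0, and suppose there is c₀ > 0 such that for every unit vector ω and every v ⊥ ω one has ⟨a''(ω) v, v⟩ ≥ c₀ |v|², where a''(ω) denotes the Hessian of a at ω. Then there exist constants c, C > 0, depending only on a, such that for every unit vector ω and every ξ ≠ 0: c |ξ| ∠(ξ, ω)² ≤ a(ξ) − ⟨∇a(ω), ξ⟩ ≤ C |ξ| ∠(ξ, ω)², where ∠(ξ, ω) ∈ [0, π] is the angle between ξ and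 ω. -/
/-!
Write `ω` for the base point and `γ(t) = cos t • ω + sin t • v` for the unit-speed great circle
from `ω` through a unit vector `u = γ θ`, where `θ = ∠(u, ω)` and `v ⊥ ω`. Along `γ` the gap
`g t = a (γ t) - ⟨∇a(ω), γ t⟩` satisfies `g 0 = g' 0 = 0`, and, since `γ'' = -γ` and Euler's
identity `Da(x) x = a(x)` holds for a one-homogeneous `a`,
`g'' + g = D²a(γ)(γ', γ')`, a Hessian evaluated on a unit vector orthogonal to the unit vector `γ`.
This lies between `c₀` and the maximum `M` of the Hessian on the sphere, so the Sturm comparison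
with `1 - cos` gives `c₀ (1 - cos θ) ≤ g θ ≤ M (1 - cos θ)` on `[0, π]`, and
`1 - cos θ ≍ θ²` there. Homogeneity extends the bound from the sphere to all `ξ ≠ 0`.
-/

open scoped RealInnerProductSpace
open Real InnerProductGeometry Module

theorem nonneg_of_second_deriv_add_self_nonneg {φ φ' φ'' : ℝ → ℝ} {θ : ℝ}
    (hθ₀ : 0 ≤ θ) (hθπ : θ ≤ π)
    (hφ : ∀ t, HasDerivAt φ (φ' t) t) (hφ' : ∀ t, HasDerivAt φ' (φ'' t) t)
    (h₀ : φ 0 = 0) (h₀' : φ' 0 = 0) (h : ∀ t ∈ Set.Icc 0 θ, 0 ≤ φ'' t + φ t) :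
    0 ≤ φ θ := by
  -- `V` is a Wronskian of `φ` against `sin (θ - ·)`, with `V 0 = 0` and `V θ = φ θ`.
  set V : ℝ → ℝ := fun t ↦ φ' t * sin (θ - t) + φ t * cos (θ - t)
  have hV : ∀ t, HasDerivAt V ((φ'' t + φ t) * sin (θ - t)) t := fun t ↦ by
    have hsub : HasDerivAt (fun t ↦ θ - t) (-1) t := (hasDerivAt_id t).const_sub θ
    exact (((hφ' t).mul hsub.sin).add ((hφ t).mul hsub.cos)).congr_deriv (by ring)
  have hmono : MonotoneOn V (Set.Icc 0 θ) := by
    refine monotoneOn_of_hasDerivWithinAt_nonneg (convex_Icc 0 θ)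
      (fun t _ ↦ (hV t).continuousAt.continuousWithinAt) (fun t _ ↦ (hV t).hasDerivWithinAt)
      fun t ht ↦ ?_
    rw [interior_Icc] at ht
    exact mul_nonneg (h t (Set.Ioo_subset_Icc_self ht))
      (sin_nonneg_of_nonneg_of_le_pi (by linarith [ht.2]) (by linarith [ht.1]))
  simpa [V, h₀, h₀'] using hmono (Set.left_mem_Icc.2 hθ₀) (Set.right_mem_Icc.2 hθ₀) hθ₀

theorem mul_one_sub_cos_le_of_second_deriv_add_self {g g' g'' : ℝ → ℝ} {m M θ : ℝ}
    (hθ₀ : 0 ≤ θ) (hθπ : θ ≤ π)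
    (hg : ∀ t, HasDerivAt g (g' t) t) (hg' : ∀ t, HasDerivAt g' (g'' t) t)
    (h₀ : g 0 = 0) (h₀' : g' 0 = 0)
    (hm : ∀ t ∈ Set.Icc 0 θ, m ≤ g'' t + g t) (hM : ∀ t ∈ Set.Icc 0 θ, g'' t + g t ≤ M) :
    m * (1 - cos θ) ≤ g θ ∧ g θ ≤ M * (1 - cos θ) := by
  have hc : ∀ (k t : ℝ), HasDerivAt (fun t ↦ k * (1 - cos t)) (k * sin t) t := fun k t ↦ by
    simpa using ((hasDerivAt_cos t).const_sub 1).const_mul k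
  have hs : ∀ (k t : ℝ), HasDerivAt (fun t ↦ k * sin t) (k * cos t) t := fun k t ↦
    (hasDerivAt_sin t).const_mul k
  constructor
  · have := nonneg_of_second_deriv_add_self_nonneg (φ := fun t ↦ g t - m * (1 - cos t)) hθ₀ hθπ
      (fun t ↦ (hg t).sub (hc m t)) (fun t ↦ (hg' t).sub (hs m t)) (by simp [h₀]) (by simp [h₀'])
      fun t ht ↦ by linarith [hm t ht]
    linarith
  · have := nonneg_of_second_deriv_add_self_nonneg (φ := fun t ↦ M * (1 - cos t) - g t) hθ₀ hθπ
      (fun t ↦ (hc M t).sub (hg t)) (fun t ↦ (hs M t).sub (hg' t)) (by simp [h₀]) (by simp [h₀'])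
      fun t ht ↦ by linarith [hM t ht]
    linarith

section InnerProductSpace

variable {E : Type*} [NormedAddCommGroup E] [InnerProductSpace ℝ E]

noncomputable def greatCircle (ω v : E) (t : ℝ) : E := cos t • ω + sin t • v

theorem greatCircle_zero (ω v : E) : greatCircle ω v 0 = ω := by simp [greatCircle]

theorem hasDerivAt_greatCircle (ω v : E) (t : ℝ) :
    HasDerivAt (greatCircle ω v) (greatCircle ω v (t + π / 2)) t := by
  rw [greatCircle, cos_add_pi_div_two, sin_add_pi_div_two]
  exact ((hasDerivAt_cos t).smul_const ω).add ((hasDerivAt_sin t).smul_const v)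

theorem greatCircle_add_pi (ω v : E) (t : ℝ) :
    greatCircle ω v (t + π) = -greatCircle ω v t := by
  simp only [greatCircle, cos_add_pi, sin_add_pi, neg_smul, neg_add]

variable {ω v : E}

theorem inner_greatCircle (hω : ‖ω‖ = 1) (hv : ‖v‖ = 1) (hωv : ⟪ω, v⟫ = 0) (s t : ℝ) :
    ⟪greatCircle ω v s, greatCircle ω v t⟫ = cos (s - t) := by
  simp only [greatCircle, inner_add_left, inner_add_right, real_inner_smul_left,
    real_inner_smul_right, real_inner_self_eq_norm_sq, hω, hv, hωv, real_inner_comm ω v, cos_sub]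
  ring

theorem norm_greatCircle (hω : ‖ω‖ = 1) (hv : ‖v‖ = 1) (hωv : ⟪ω, v⟫ = 0) (t : ℝ) :
    ‖greatCircle ω v t‖ = 1 := by
  have := inner_greatCircle hω hv hωv t t
  rw [real_inner_self_eq_norm_sq, sub_self, cos_zero] at this
  exact (pow_eq_one_iff_of_nonneg (norm_nonneg _) two_ne_zero).1 this

theorem exists_unit_orthogonal (hE : 2 ≤ finrank ℝ E) (ω : E) :
    ∃ v : E, ‖v‖ = 1 ∧ ⟪ω, v⟫ = 0 := by
  have : FiniteDimensional ℝ E := Module.finite_of_finrank_pos (by omega)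
  have hK : (ℝ ∙ ω)ᗮ ≠ ⊥ := by
    rw [Ne, Submodule.orthogonal_eq_bot_iff]
    intro htop
    have h1 : finrank ℝ (ℝ ∙ ω) ≤ 1 := by simpa using finrank_span_le_card ({ω} : Set E)
    rw [htop, finrank_top] at h1
    omega
  obtain ⟨w, hw, hw0⟩ := Submodule.exists_mem_ne_zero_of_ne_bot hK
  refine ⟨‖w‖⁻¹ • w, norm_smul_inv_norm hw0, ?_⟩
  rw [real_inner_smul_right, Submodule.mem_orthogonal_singleton_iff_inner_right.1 hw, mul_zero]

theorem exists_unit_orthogonal_smul_eq (hE : 2 ≤ finrank ℝ E) {w : E} (hw : ⟪ω, w⟫ = 0) :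
    ∃ v : E, ‖v‖ = 1 ∧ ⟪ω, v⟫ = 0 ∧ ‖w‖ • v = w := by
  rcases eq_or_ne w 0 with rfl | hw0
  · obtain ⟨v, hv, hωv⟩ := exists_unit_orthogonal hE ω
    exact ⟨v, hv, hωv, by simp⟩
  · refine ⟨‖w‖⁻¹ • w, norm_smul_inv_norm hw0, ?_, ?_⟩
    · rw [real_inner_smul_right, hw, mul_zero]
    · rw [smul_smul, mul_inv_cancel₀ (norm_ne_zero_iff.2 hw0), one_smul]

theorem exists_greatCircle_angle_eq (hE : 2 ≤ finrank ℝ E) {u : E} (hω : ‖ω‖ = 1)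
    (hu : ‖u‖ = 1) : ∃ v : E, ‖v‖ = 1 ∧ ⟪ω, v⟫ = 0 ∧ greatCircle ω v (angle u ω) = u := by
  set w := u - ⟪ω, u⟫ • ω
  have hw : ⟪ω, w⟫ = 0 := by
    rw [inner_sub_right, real_inner_smul_right, real_inner_self_eq_norm_sq, hω]
    ring
  have hcos : cos (angle u ω) = ⟪ω, u⟫ := by rw [cos_angle, hu, hω, real_inner_comm]; simp
  have hsin : sin (angle u ω) = ‖w‖ := by
    refine (sq_eq_sq₀ (sin_nonneg_of_nonneg_of_le_pi (angle_nonneg u ω) (angle_le_pi u ω))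
      (norm_nonneg w)).1 ?_
    rw [sin_sq, hcos, norm_sub_sq_real, real_inner_smul_right, norm_smul, mul_pow,
      Real.norm_eq_abs, sq_abs, hu, hω, real_inner_comm]
    ring
  obtain ⟨v, hv, hωv, hvw⟩ := exists_unit_orthogonal_smul_eq hE hw
  refine ⟨v, hv, hωv, ?_⟩
  rw [greatCircle, hcos, hsin, hvw, add_sub_cancel]

variable {a : E → ℝ}

theorem fderiv_apply_self_of_homogeneous {x : E} (hd : DifferentiableAt ℝ a x)
    (hhom : ∀ c : ℝ, 0 < c → a (c • x) = c * a x) : fderiv ℝ a x x = a x := by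
  have h₁ : HasDerivAt (fun c : ℝ ↦ a (c • x)) (fderiv ℝ a x x) 1 :=
    (hd.hasFDerivAt.comp_hasDerivAt_of_eq 1 ((hasDerivAt_id 1).smul_const x)
      (one_smul ℝ x).symm).congr_deriv (by rw [one_smul])
  have h₂ : HasDerivAt (fun c : ℝ ↦ a (c • x)) (a x) 1 := by
    refine (((hasDerivAt_id 1).mul_const (a x)).congr_deriv (one_mul _)).congr_of_eventuallyEq ?_
    filter_upwards [lt_mem_nhds one_pos] with c hc using hhom c hc
  exact h₁.unique h₂

theorem mul_one_sub_cos_le_sub_fderiv_greatCircle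
    (hsmooth : ContDiffOn ℝ 2 a {ξ : E | ξ ≠ 0})
    (hhom : ∀ c : ℝ, 0 < c → ∀ ξ : E, ξ ≠ 0 → a (c • ξ) = c * a ξ) {m M : ℝ}
    (hm : ∀ x v : E, ‖x‖ = 1 → ‖v‖ = 1 → ⟪v, x⟫ = 0 → m ≤ fderiv ℝ (fderiv ℝ a) x v v)
    (hM : ∀ x v : E, ‖x‖ = 1 → ‖v‖ = 1 → ⟪v, x⟫ = 0 → fderiv ℝ (fderiv ℝ a) x v v ≤ M)
    (hω : ‖ω‖ = 1) (hv : ‖v‖ = 1) (hωv : ⟪ω, v⟫ = 0) {θ : ℝ} (hθ₀ : 0 ≤ θ) (hθπ : θ ≤ π) :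
    m * (1 - cos θ) ≤ a (greatCircle ω v θ) - fderiv ℝ a ω (greatCircle ω v θ) ∧
      a (greatCircle ω v θ) - fderiv ℝ a ω (greatCircle ω v θ) ≤ M * (1 - cos θ) := by
  set γ := greatCircle ω v
  have hγ : ∀ t, ‖γ t‖ = 1 := norm_greatCircle hω hv hωv
  have hγ' : ∀ t, ‖γ (t + π / 2)‖ = 1 := fun t ↦ hγ _
  have hγγ' : ∀ t, ⟪γ (t + π / 2), γ t⟫ = 0 := fun t ↦ by
    rw [inner_greatCircle hω hv hωv, add_sub_cancel_left, cos_pi_div_two]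
  have hγd : ∀ t, HasDerivAt γ (γ (t + π / 2)) t := hasDerivAt_greatCircle ω v
  have hγπ : ∀ t, γ (t + π) = -γ t := greatCircle_add_pi ω v
  have hγ₀ : ∀ t, γ t ≠ 0 := fun t h ↦ by simpa [h] using hγ t
  have hcd : ∀ t, ContDiffAt ℝ 2 a (γ t) := fun t ↦
    hsmooth.contDiffAt (isOpen_ne.mem_nhds (hγ₀ t))
  have hd₁ : ∀ t, HasFDerivAt a (fderiv ℝ a (γ t)) (γ t) := fun t ↦
    ((hcd t).differentiableAt (by norm_num)).hasFDerivAt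
  have hd₂ : ∀ t, HasFDerivAt (fderiv ℝ a) (fderiv ℝ (fderiv ℝ a) (γ t)) (γ t) := fun t ↦
    (((hcd t).fderiv_right (m := 1) le_rfl).differentiableAt one_ne_zero).hasFDerivAt
  have heuler : ∀ t, fderiv ℝ a (γ t) (γ t) = a (γ t) := fun t ↦
    fderiv_apply_self_of_homogeneous (hd₁ t).differentiableAt fun c hc ↦ hhom c hc _ (hγ₀ t)
  set g := fun t ↦ a (γ t) - fderiv ℝ a ω (γ t)
  set g' := fun t ↦ (fderiv ℝ a (γ t) - fderiv ℝ a ω) (γ (t + π / 2))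
  set hess := fun t ↦ fderiv ℝ (fderiv ℝ a) (γ t) (γ (t + π / 2)) (γ (t + π / 2))
  have hg : ∀ t, HasDerivAt g (g' t) t := fun t ↦
    ((hd₁ t).comp_hasDerivAt t (hγd t)).sub ((fderiv ℝ a ω).hasFDerivAt.comp_hasDerivAt t (hγd t))
  have hg' : ∀ t, HasDerivAt g' (hess t - g t) t := fun t ↦ by
    have hc := ((hd₂ t).comp_hasDerivAt t (hγd t)).sub_const (fderiv ℝ a ω)
    refine (hc.clm_apply ((hγd (t + π / 2)).comp_add_const t (π / 2))).congr_deriv ?_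
    rw [add_assoc, add_halves, hγπ]
    simp only [g, hess, Function.comp_apply, map_neg, sub_apply, heuler]
    ring
  have hγ0 : γ 0 = ω := greatCircle_zero ω v
  have h₀ : g 0 = 0 := by
    have := heuler 0
    rw [hγ0] at this
    simp only [g, hγ0, this, sub_self]
  have h₀' : g' 0 = 0 := by simp only [g', hγ0, sub_self, zero_apply]
  exact mul_one_sub_cos_le_of_second_deriv_add_self hθ₀ hθπ hg hg' h₀ h₀'
    (fun t _ ↦ by simpa using hm _ _ (hγ t) (hγ' t) (hγγ' t))
    (fun t _ ↦ by simpa using hM _ _ (hγ t) (hγ' t) (hγγ' t))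

theorem exists_hessian_le_on_sphere [ProperSpace E] (hsmooth : ContDiffOn ℝ 2 a {ξ : E | ξ ≠ 0}) :
    ∃ M > 0, ∀ x v : E, ‖x‖ = 1 → ‖v‖ = 1 → fderiv ℝ (fderiv ℝ a) x v v ≤ M := by
  have hcont : ContinuousOn (fderiv ℝ (fderiv ℝ a)) {ξ : E | ξ ≠ 0} :=
    (hsmooth.fderiv_of_isOpen isOpen_ne (m := 1) le_rfl).continuousOn_fderiv_of_isOpen
      isOpen_ne le_rfl
  obtain ⟨M, hM⟩ := (isCompact_sphere (0 : E) 1).exists_bound_of_continuousOn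
    (f := fderiv ℝ (fderiv ℝ a)) (hcont.mono fun x hx ↦ ne_zero_of_mem_unit_sphere ⟨x, hx⟩)
  refine ⟨max M 1, by positivity, fun x v hx hv ↦ ?_⟩
  calc fderiv ℝ (fderiv ℝ a) x v v ≤ ‖fderiv ℝ (fderiv ℝ a) x‖ * ‖v‖ * ‖v‖ :=
        (le_abs_self _).trans ((fderiv ℝ (fderiv ℝ a) x).le_opNorm₂ v v)
    _ ≤ max M 1 := by
        rw [hv, mul_one, mul_one]
        exact (hM x (by simpa using hx)).trans (le_max_left _ _)

theorem mul_norm_mul_one_sub_cos_angle_le_sub_fderiv (hE : 2 ≤ finrank ℝ E)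
    (hsmooth : ContDiffOn ℝ 2 a {ξ : E | ξ ≠ 0})
    (hhom : ∀ c : ℝ, 0 < c → ∀ ξ : E, ξ ≠ 0 → a (c • ξ) = c * a ξ) {m M : ℝ}
    (hm : ∀ x v : E, ‖x‖ = 1 → ‖v‖ = 1 → ⟪v, x⟫ = 0 → m ≤ fderiv ℝ (fderiv ℝ a) x v v)
    (hM : ∀ x v : E, ‖x‖ = 1 → ‖v‖ = 1 → ⟪v, x⟫ = 0 → fderiv ℝ (fderiv ℝ a) x v v ≤ M)
    (hω : ‖ω‖ = 1) {ξ : E} (hξ : ξ ≠ 0) :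
    m * ‖ξ‖ * (1 - cos (angle ξ ω)) ≤ a ξ - fderiv ℝ a ω ξ ∧
      a ξ - fderiv ℝ a ω ξ ≤ M * ‖ξ‖ * (1 - cos (angle ξ ω)) := by
  obtain ⟨r, u, hr, hu, rfl⟩ : ∃ r u, 0 < r ∧ ‖u‖ = 1 ∧ r • u = ξ :=
    ⟨‖ξ‖, ‖ξ‖⁻¹ • ξ, norm_pos_iff.2 hξ, norm_smul_inv_norm hξ,
      by rw [smul_smul, mul_inv_cancel₀ (norm_ne_zero_iff.2 hξ), one_smul]⟩
  obtain ⟨v, hv, hωv, hvu⟩ := exists_greatCircle_angle_eq hE hω hu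
  obtain ⟨hlo, hhi⟩ := mul_one_sub_cos_le_sub_fderiv_greatCircle hsmooth hhom hm hM hω hv hωv
    (angle_nonneg u ω) (angle_le_pi u ω)
  rw [hvu] at hlo hhi
  have hu₀ : u ≠ 0 := by rintro rfl; simp at hu
  rw [norm_smul, hu, Real.norm_of_nonneg hr.le, mul_one, angle_smul_left_of_pos u ω hr,
    hhom r hr u hu₀, map_smul, smul_eq_mul, ← mul_sub, mul_comm r, mul_right_comm m,
    mul_right_comm M]
  exact ⟨mul_le_mul_of_nonneg_right hlo hr.le, mul_le_mul_of_nonneg_right hhi hr.le⟩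

end InnerProductSpace

theorem microellipticity_one_homogeneous_general
    (n : ℕ) (hn : 2 ≤ n)
    (a : EuclideanSpace ℝ (Fin n) → ℝ) (c₀ : ℝ) (hc₀ : 0 < c₀)
    (hsmooth : ContDiffOn ℝ (⊤ : ℕ∞) a {ξ : EuclideanSpace ℝ (Fin n) | ξ ≠ 0})
    (hhom : ∀ (c : ℝ), 0 < c → ∀ ξ : EuclideanSpace ℝ (Fin n), ξ ≠ 0 → a (c • ξ) = c * a ξ)
    (hconv : ∀ ω : EuclideanSpace ℝ (Fin n), ‖ω‖ = 1 →
      ∀ v : EuclideanSpace ℝ (Fin n), ⟪v, ω⟫ = 0 →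
        c₀ * ‖v‖ ^ 2 ≤ iteratedFDeriv ℝ 2 a ω ![v, v]) :
    ∃ c > 0, ∃ C > 0, ∀ ω : EuclideanSpace ℝ (Fin n), ‖ω‖ = 1 →
      ∀ ξ : EuclideanSpace ℝ (Fin n), ξ ≠ 0 →
        c * ‖ξ‖ * InnerProductGeometry.angle ξ ω ^ 2 ≤ a ξ - ⟪gradient a ω, ξ⟫ ∧
        a ξ - ⟪gradient a ω, ξ⟫ ≤ C * ‖ξ‖ * InnerProductGeometry.angle ξ ω ^ 2 := by
  have hsmooth₂ : ContDiffOn ℝ 2 a {ξ | ξ ≠ 0} := hsmooth.of_le (WithTop.coe_le_coe.2 le_top)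
  have hm : ∀ x v : EuclideanSpace ℝ (Fin n), ‖x‖ = 1 → ‖v‖ = 1 → ⟪v, x⟫ = 0 →
      c₀ ≤ fderiv ℝ (fderiv ℝ a) x v v := fun x v hx hv hvx ↦ by
    simpa [hv, iteratedFDeriv_two_apply] using hconv x hx v hvx
  obtain ⟨M, hM₀, hM⟩ := exists_hessian_le_on_sphere hsmooth₂
  refine ⟨c₀ * (2 / π ^ 2), by positivity, M / 2, by positivity, fun ω hω ξ hξ ↦ ?_⟩
  obtain ⟨hlo, hhi⟩ := mul_norm_mul_one_sub_cos_angle_le_sub_fderiv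
    (by rwa [finrank_euclideanSpace_fin]) hsmooth₂ hhom hm (fun x v hx hv _ ↦ hM x v hx hv) hω hξ
  rw [gradient, InnerProductSpace.toDual_symm_apply]
  set θ := angle ξ ω
  have hθ : |θ| ≤ π := abs_le.2 ⟨by linarith [angle_nonneg ξ ω, pi_pos], angle_le_pi ξ ω⟩
  have hcos_lo : 2 / π ^ 2 * θ ^ 2 ≤ 1 - cos θ := by linarith [cos_le_one_sub_mul_cos_sq hθ]
  have hcos_hi : 1 - cos θ ≤ θ ^ 2 / 2 := by linarith [one_sub_sq_div_two_le_cos (x := θ)]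
  constructor
  · calc c₀ * (2 / π ^ 2) * ‖ξ‖ * θ ^ 2 = c₀ * ‖ξ‖ * (2 / π ^ 2 * θ ^ 2) := by ring
      _ ≤ c₀ * ‖ξ‖ * (1 - cos θ) := by gcongr
      _ ≤ _ := hlo
  · calc _ ≤ M * ‖ξ‖ * (1 - cos θ) := hhi
      _ ≤ M * ‖ξ‖ * (θ ^ 2 / 2) := by gcongr
      _ = M / 2 * ‖ξ‖ * θ ^ 2 := by ring

/-- **Microellipticity of one-homogeneous symbols at angular separation.**
Let `a : ℝⁿ ∖ {0} → ℝ` be smooth, positively homogeneous of degree 1 and positive, with Hessian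
uniformly positive definite on the orthogonal complement of each unit vector. Then there are
constants `c, C > 0` depending only on `a` such that for every unit vector `ω` and every `ξ ≠ 0`,
`c |ξ| ∠(ξ,ω)² ≤ a(ξ) − ⟨∇a(ω), ξ⟩ ≤ C |ξ| ∠(ξ,ω)²`. -/
theorem microellipticity_one_homogeneous
    (n : ℕ) (hn : 2 ≤ n)
    (a : EuclideanSpace ℝ (Fin n) → ℝ) (c₀ : ℝ) (hc₀ : 0 < c₀)
    (hsmooth : ContDiffOn ℝ (⊤ : ℕ∞) a {ξ : EuclideanSpace ℝ (Fin n) | ξ ≠ 0})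
    (hhom : ∀ (c : ℝ), 0 < c → ∀ ξ : EuclideanSpace ℝ (Fin n), ξ ≠ 0 → a (c • ξ) = c * a ξ)
    (hpos : ∀ ξ : EuclideanSpace ℝ (Fin n), ξ ≠ 0 → 0 < a ξ)
    (hconv : ∀ ω : EuclideanSpace ℝ (Fin n), ‖ω‖ = 1 →
      ∀ v : EuclideanSpace ℝ (Fin n), ⟪v, ω⟫ = 0 →
        c₀ * ‖v‖ ^ 2 ≤ iteratedFDeriv ℝ 2 a ω ![v, v]) :
    ∃ c > 0, ∃ C > 0, ∀ ω : EuclideanSpace ℝ (Fin n), ‖ω‖ = 1 →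
      ∀ ξ : EuclideanSpace ℝ (Fin n), ξ ≠ 0 →
        c * ‖ξ‖ * InnerProductGeometry.angle ξ ω ^ 2 ≤ a ξ - ⟪gradient a ω, ξ⟫ ∧
        a ξ - ⟪gradient a ω, ξ⟫ ≤ C * ‖ξ‖ * InnerProductGeometry.angle ξ ω ^ 2 :=
  microellipticity_one_homogeneous_general n hn a c₀ hc₀ hsmooth hhom hconv
end
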